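/- Let G be a finite simple graph, ℓ ≥ 1 an integer, α ≥ 1 and L > 0 real numbers. Assume: (a) G is ℓ-tangle-free; (b) for every cycle 𝒞 of G and every t ∈ {0, …, ℓ}, the number of vertices v with d(v, 𝒞) = t is at most L·α^t; (c) the sets V_𝒞 = {v : d(v, 𝒞) ≤ ℓ} are pairwise disjoint as 𝒞 ranges over the cycles of G. Then the spectral radius of B^(ℓ) − D^(ℓ) is at most (ℓ+1)·L·α^{ℓ/2}. -/

import Mathlib

/-- The spectral radius of a real symmetric matrix, defined (equivalently) as the ℓ2
operator norm of the induced operator on Euclidean space. -/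
noncomputable def specRad {n : Type*} [Fintype n] [DecidableEq n]
    (A : Matrix n n ℝ) : ℝ :=
  ‖Matrix.toEuclideanCLM (𝕜 := ℝ) A‖

/-- The `(i,j)` entry of the path expansion matrix `B^(ℓ)`: the number of self-avoiding
paths of length `ℓ` from `i` to `j`. -/
noncomputable def pathCount {V : Type*} (G : SimpleGraph V) (ℓ : ℕ) (i j : V) : ℕ :=
  Set.ncard {p : G.Walk i j | p.IsPath ∧ p.length = ℓ}

/-- The distance (in `ℕ∞`) from a vertex `v` to a set `S` of vertices. -/
noncomputable def edistToSet {V : Type*} (G : SimpleGraph V) (S : Set V) (v : V) : ℕ∞ :=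
  ⨅ w ∈ S, G.edist v w

/-- A graph is `ℓ`-tangle-free if, for every vertex `v`, any two cycles all of whose
vertices lie at graph distance at most `ℓ` from `v` have the same edge set. -/
def TangleFree {V : Type*} [DecidableEq V] (G : SimpleGraph V) (ℓ : ℕ) : Prop :=
  ∀ (v a b : V) (c₁ : G.Walk a a) (c₂ : G.Walk b b),
    c₁.IsCycle → c₂.IsCycle →
    (∀ w ∈ c₁.support, G.edist v w ≤ (ℓ : ℕ∞)) →
    (∀ w ∈ c₂.support, G.edist v w ≤ (ℓ : ℕ∞)) →
    c₁.edges.toFinset = c₂.edges.toFinset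

/-!
Put `β = √α` and give each vertex `v` the weight `β ^ (ℓ - d(v, K))`, where `K` is the set of
vertices lying on cycles. The `(i, j)` entry of `B^(ℓ) - D^(ℓ)` vanishes unless there are two
distinct paths of length `≤ ℓ` from `i` to `j`; their union contains a cycle `𝒞` with
`d(i, 𝒞) + d(j, 𝒞) ≤ ℓ`. Three such paths would give two cycles with different edge sets: delete
an edge `e` of one cycle in their union; what remains either has another cycle, or is a forest,
and then distinct paths with the same ends differ in whether they use `e`, which three paths
cannot all do pairwise. Both cycles are within `ℓ` of `i`, against the disjointness of the
`V_𝒞`. Hence every entry has absolute value at most `1`, and `𝒞` is the only cycle within `ℓ` of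
`i`, so `d(·, K) = d(·, 𝒞)` along row `i`. Summing the weights layer by layer over
`{j | d(j, 𝒞) = t}`, `t ≤ ℓ - d(i, 𝒞)`, with the growth bound `L α^t` gives row sums at most
`(ℓ + 1) L β^ℓ` times the weight of `i`, and the Schur test turns this into the norm bound.
-/

open Finset

namespace Matrix

variable {n : Type*} [Fintype n]

theorem sum_sq_mulVec_le_of_weighted_sum_le (A : Matrix n n ℝ) {h : n → ℝ} (hh : ∀ i, 0 < h i)
    {C : ℝ} (hC : 0 ≤ C) (hrow : ∀ i, ∑ j, |A i j| * h j ≤ C * h i)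
    (hcol : ∀ j, ∑ i, |A i j| * h i ≤ C * h j) (x : n → ℝ) :
    ∑ i, (A *ᵥ x) i ^ 2 ≤ C ^ 2 * ∑ j, x j ^ 2 := by
  -- weighted Cauchy–Schwarz: `(|A i j| |x j|)² = (|A i j| h j) · (|A i j| x j² / h j)`
  have hrowCS : ∀ i, (A *ᵥ x) i ^ 2 ≤ (∑ j, |A i j| * h j) * ∑ j, |A i j| * (x j ^ 2 / h j) := by
    intro i
    calc (A *ᵥ x) i ^ 2 ≤ (∑ j, |A i j| * |x j|) ^ 2 := by
          rw [← sq_abs]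
          gcongr
          simpa [mulVec, dotProduct, abs_mul] using abs_sum_le_sum_abs (fun j => A i j * x j) univ
      _ ≤ _ := by
          refine sum_sq_le_sum_mul_sum_of_sq_le_mul _ (fun j _ => by have := hh j; positivity)
            (fun j _ => by have := hh j; positivity) fun j _ => le_of_eq ?_
          field_simp [(hh j).ne']
          rw [sq_abs, sq_abs]
  calc ∑ i, (A *ᵥ x) i ^ 2
      ≤ ∑ i, C * h i * ∑ j, |A i j| * (x j ^ 2 / h j) := by
        gcongr with i
        exact (hrowCS i).trans (mul_le_mul_of_nonneg_right (hrow i)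
          (sum_nonneg fun j _ => by have := hh j; positivity))
    _ = C * ∑ j, (∑ i, |A i j| * h i) * (x j ^ 2 / h j) := by
        simp only [mul_sum, sum_mul]
        rw [sum_comm]
        refine sum_congr rfl fun j _ => sum_congr rfl fun i _ => by ring
    _ ≤ C * ∑ j, C * h j * (x j ^ 2 / h j) := by
        gcongr with j
        · exact div_nonneg (sq_nonneg _) (hh j).le
        · exact hcol j
    _ = C ^ 2 * ∑ j, x j ^ 2 := by
        rw [mul_sum, mul_sum]
        refine sum_congr rfl fun j _ => ?_
        field_simp [(hh j).ne']

theorem norm_toEuclideanCLM_le_of_weighted_sum_le [DecidableEq n] (A : Matrix n n ℝ)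
    {h : n → ℝ} (hh : ∀ i, 0 < h i) {C : ℝ} (hC : 0 ≤ C)
    (hrow : ∀ i, ∑ j, |A i j| * h j ≤ C * h i) (hcol : ∀ j, ∑ i, |A i j| * h i ≤ C * h j) :
    ‖toEuclideanCLM (𝕜 := ℝ) A‖ ≤ C := by
  refine ContinuousLinearMap.opNorm_le_bound _ hC fun x => ?_
  rw [← pow_le_pow_iff_left₀ (norm_nonneg _) (by positivity) two_ne_zero, mul_pow,
    EuclideanSpace.norm_sq_eq, EuclideanSpace.norm_sq_eq]
  simpa only [ofLp_toEuclideanCLM, Real.norm_eq_abs, sq_abs] using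
    sum_sq_mulVec_le_of_weighted_sum_le A hh hC hrow hcol x

end Matrix

theorem sum_pow_sub_toNat_le {ι : Type*} [Fintype ι] (d : ι → ℕ∞) {β L : ℝ} (hβ : 1 ≤ β)
    {ℓ m : ℕ} (hm : m ≤ ℓ) (hd : ∀ t ≤ ℓ, ({x | d x = t}.ncard : ℝ) ≤ L * (β ^ 2) ^ t) :
    ∑ x with d x ≤ m, β ^ (ℓ - (d x).toNat) ≤ (m + 1) * L * β ^ (ℓ + m) := by
  classical
  have hL : 0 ≤ L := by simpa using (Nat.cast_nonneg _).trans (hd 0 (Nat.zero_le _))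
  have hlayer : ∀ t ∈ range (m + 1),
      ∑ x ∈ {x | d x ≤ m} with (d x).toNat = t, β ^ (ℓ - (d x).toNat) ≤ L * β ^ (ℓ + m) := by
    intro t ht
    have ht : t ≤ m := Nat.lt_succ_iff.mp (mem_range.mp ht)
    have hfilter : ((univ.filter fun x => d x ≤ m).filter fun x => (d x).toNat = t) =
        univ.filter fun x => d x = t := by
      ext x
      simp only [mem_filter, mem_univ, true_and]
      constructor
      · rintro ⟨hle, rfl⟩
        exact (ENat.natCast_toNat (ne_top_of_le_ne_top (by simp) hle)).symm
      · intro h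
        simp [h, ht]
    calc ∑ x ∈ {x | d x ≤ m} with (d x).toNat = t, β ^ (ℓ - (d x).toNat)
        = #{x | d x = t} * β ^ (ℓ - t) := by
          rw [hfilter, sum_congr rfl fun x hx => by rw [(mem_filter.mp hx).2, ENat.toNat_natCast],
            sum_const, nsmul_eq_mul]
      _ ≤ L * (β ^ 2) ^ t * β ^ (ℓ - t) := by
          gcongr
          have := hd t (ht.trans hm)
          rwa [← coe_filter_univ, Set.ncard_coe_finset] at this
      _ = L * β ^ (ℓ + t) := by
          rw [← pow_mul, mul_assoc, ← pow_add]
          congr 2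
          omega
      _ ≤ L * β ^ (ℓ + m) := by gcongr
  calc ∑ x with d x ≤ m, β ^ (ℓ - (d x).toNat)
      = ∑ t ∈ range (m + 1), ∑ x ∈ {x | d x ≤ m} with (d x).toNat = t, β ^ (ℓ - (d x).toNat) := by
        refine (sum_fiberwise_of_maps_to (fun x hx => ?_) _).symm
        rw [mem_range, Nat.lt_succ_iff]
        exact ENat.toNat_le_of_le_natCast (mem_filter.mp hx).2
    _ ≤ ∑ t ∈ range (m + 1), L * β ^ (ℓ + m) := sum_le_sum hlayer
    _ = (m + 1) * L * β ^ (ℓ + m) := by simp [mul_assoc]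

namespace SimpleGraph

variable {V : Type*} {G : SimpleGraph V} {x y u v : V}

namespace Walk

theorem edist_add_edist_le_length {w : V} (p : G.Walk u v) (hw : w ∈ p.support) :
    G.edist u w + G.edist w v ≤ p.length := by
  classical
  calc G.edist u w + G.edist w v
      ≤ (p.takeUntil w hw).length + (p.dropUntil w hw).length :=
        add_le_add (edist_le _) (edist_le _)
    _ = p.length := by rw [← Nat.cast_add, ← length_append, take_spec]

theorem exists_eq_append_cons_of_mem_edges {p : G.Walk x y} (he : s(u, v) ∈ p.edges) :
    (∃ (a : G.Walk x u) (h : G.Adj u v) (b : G.Walk v y), p = a.append (cons h b)) ∨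
      ∃ (a : G.Walk x v) (h : G.Adj v u) (b : G.Walk u y), p = a.append (cons h b) := by
  induction p with
  | nil => simp at he
  | cons h q ih =>
    rcases List.mem_cons.mp he with he | he
    · rcases Sym2.eq_iff.mp he with ⟨rfl, rfl⟩ | ⟨rfl, rfl⟩
      · exact .inl ⟨nil, h, q, rfl⟩
      · exact .inr ⟨nil, h, q, rfl⟩
    · rcases ih he with ⟨a, h', b, rfl⟩ | ⟨a, h', b, rfl⟩
      · exact .inl ⟨cons h a, h', b, rfl⟩
      · exact .inr ⟨cons h a, h', b, rfl⟩

theorem IsPath.of_append_cons {a : G.Walk x u} {h : G.Adj u v} {b : G.Walk v y}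
    (hp : (a.append (cons h b)).IsPath) :
    s(u, v) ∉ a.edges ∧ s(u, v) ∉ b.edges ∧ a.support.Disjoint b.support := by
  have hedges := hp.isTrail.edges_nodup
  rw [edges_append, edges_cons, List.nodup_append, List.nodup_cons] at hedges
  have hsupport := hp.support_nodup
  rw [support_append, support_cons, List.tail_cons, List.nodup_append] at hsupport
  exact ⟨fun he => hedges.2.2 _ he _ List.mem_cons_self rfl, hedges.2.1.1,
    fun w ha hb => hsupport.2.2 w ha w hb rfl⟩

theorem toDeleteEdge_injective {e : Sym2 V} {p q : G.Walk u v} (hp : e ∉ p.edges)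
    (hq : e ∉ q.edges) (h : p.toDeleteEdge e hp = q.toDeleteEdge e hq) : p = q := by
  simpa using congrArg (Walk.map (.ofLE (G.deleteEdges_le {e}))) h

end Walk

namespace IsAcyclic

open Walk

theorem not_disjoint_support_of_swapped (hG : G.IsAcyclic) (a : G.Walk x u) (b : G.Walk v y)
    (a' : G.Walk x v) (b' : G.Walk u y) (hab : a.support.Disjoint b.support) :
    ¬ a'.support.Disjoint b'.support := by
  classical
  intro ha'b'
  -- the unique `u`–`v` path runs inside `a ∪ a'` and inside `b' ∪ b`; where it leaves
  -- `a ∩ b'`, one endpoint of its edge lies in `a ∩ b` or in `a' ∩ b'`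
  set τ := (a.reverse.append a').bypass
  have hτ : τ = (b'.append b.reverse).bypass := congrArg Subtype.val <|
    (hG.subsingleton_path u v).elim ⟨_, bypass_isPath _⟩ ⟨_, bypass_isPath _⟩
  obtain ⟨d, hd, hfst, hsnd⟩ := τ.exists_boundary_dart {w | w ∈ a.support ∧ w ∈ b'.support}
    ⟨a.end_mem_support, b'.start_mem_support⟩ fun h => hab h.1 b.start_mem_support
  have hdτ : s(d.fst, d.snd) ∈ τ.edges := List.mem_map_of_mem (f := Dart.edge) hd
  have hdb : s(d.fst, d.snd) ∈ b'.edges ++ b.reverse.edges := by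
    rw [hτ] at hdτ
    simpa only [edges_append] using edges_bypass_subset_edges _ hdτ
  rcases List.mem_append.mp (by simpa only [edges_append] using edges_bypass_subset_edges _ hdτ)
    with ha | ha'
  · have hsnd_a : d.snd ∈ a.support := by
      simpa using snd_mem_support_of_mem_edges _ ha
    rcases List.mem_append.mp hdb with hb' | hb
    · exact hsnd ⟨hsnd_a, snd_mem_support_of_mem_edges _ hb'⟩
    · exact hab hsnd_a (by simpa using snd_mem_support_of_mem_edges _ hb)
  · exact ha'b' (fst_mem_support_of_mem_edges _ ha') hfst.2

variable {e : Sym2 V}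

theorem eq_of_isPath_of_notMem_edges (hG : (G.deleteEdges {e}).IsAcyclic) {p q : G.Walk x y}
    (hp : p.IsPath) (hq : q.IsPath) (hpe : e ∉ p.edges) (hqe : e ∉ q.edges) : p = q :=
  toDeleteEdge_injective hpe hqe <| congrArg Subtype.val <| (hG.subsingleton_path x y).elim
    ⟨p.toDeleteEdge e hpe, hp.toDeleteEdges _ _ _⟩ ⟨q.toDeleteEdge e hqe, hq.toDeleteEdges _ _ _⟩

theorem eq_of_isPath_append_cons (hG : (G.deleteEdges {s(u, v)}).IsAcyclic)
    {a a' : G.Walk x u} {h h' : G.Adj u v} {b b' : G.Walk v y}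
    (hp : (a.append (cons h b)).IsPath) (hq : (a'.append (cons h' b')).IsPath) :
    a.append (cons h b) = a'.append (cons h' b') := by
  obtain ⟨ha, hb, -⟩ := hp.of_append_cons
  obtain ⟨ha', hb', -⟩ := hq.of_append_cons
  rw [hG.eq_of_isPath_of_notMem_edges hp.of_append_left hq.of_append_left ha ha',
    hG.eq_of_isPath_of_notMem_edges hp.of_append_right.of_cons hq.of_append_right.of_cons hb hb']

theorem not_isPath_append_cons_swap (hG : (G.deleteEdges {s(u, v)}).IsAcyclic)
    {a : G.Walk x u} {h : G.Adj u v} {b : G.Walk v y} {a' : G.Walk x v} {h' : G.Adj v u}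
    {b' : G.Walk u y} (hp : (a.append (cons h b)).IsPath) :
    ¬ (a'.append (cons h' b')).IsPath := by
  intro hq
  obtain ⟨ha, hb, hab⟩ := hp.of_append_cons
  obtain ⟨ha', hb', ha'b'⟩ := hq.of_append_cons
  rw [Sym2.eq_swap] at ha' hb'
  refine hG.not_disjoint_support_of_swapped (a.toDeleteEdge _ ha) (b.toDeleteEdge _ hb)
    (a'.toDeleteEdge _ ha') (b'.toDeleteEdge _ hb') ?_ ?_ <;>
    simpa only [support_transfer]

theorem mem_edges_iff_notMem_edges (hG : (G.deleteEdges {e}).IsAcyclic) {p q : G.Walk x y}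
    (hp : p.IsPath) (hq : q.IsPath) (hpq : p ≠ q) : e ∈ p.edges ↔ e ∉ q.edges := by
  by_cases hpe : e ∈ p.edges <;> by_cases hqe : e ∈ q.edges <;> simp only [hpe, hqe, not_true,
    not_false_iff, iff_true, iff_false]
  · induction e using Sym2.ind with | _ u v => ?_
    have hG' : (G.deleteEdges {s(v, u)}).IsAcyclic := by rwa [Sym2.eq_swap]
    rcases exists_eq_append_cons_of_mem_edges hpe with ⟨a, h, b, rfl⟩ | ⟨a, h, b, rfl⟩ <;>
      rcases exists_eq_append_cons_of_mem_edges hqe with ⟨a', h', b', rfl⟩ | ⟨a', h', b', rfl⟩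
    · exact hpq (hG.eq_of_isPath_append_cons hp hq)
    · exact hG.not_isPath_append_cons_swap hp hq
    · exact hG'.not_isPath_append_cons_swap hp hq
    · exact hpq (hG'.eq_of_isPath_append_cons hp hq)
  · exact hpq (hG.eq_of_isPath_of_notMem_edges hp hq hpe hqe)

end IsAcyclic

theorem exists_isCycle_of_isPath_ne {p q : G.Walk x y} (hp : p.IsPath) (hq : q.IsPath)
    (hpq : p ≠ q) : ∃ (a : V) (c : G.Walk a a), c.IsCycle := by
  by_contra! h
  exact hpq <| congrArg Subtype.val <|
    ((show G.IsAcyclic from h).subsingleton_path x y).elim ⟨p, hp⟩ ⟨q, hq⟩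

theorem exists_isCycle_mem_notMem_of_isPath {p₁ p₂ p₃ : G.Walk x y} (hp₁ : p₁.IsPath)
    (hp₂ : p₂.IsPath) (hp₃ : p₃.IsPath) (h₁₂ : p₁ ≠ p₂) (h₁₃ : p₁ ≠ p₃) (h₂₃ : p₂ ≠ p₃) :
    ∃ (a b : V) (c : G.Walk a a) (c' : G.Walk b b) (e : Sym2 V),
      c.IsCycle ∧ c'.IsCycle ∧ e ∈ c.edges ∧ e ∉ c'.edges := by
  obtain ⟨a, c, hc⟩ := exists_isCycle_of_isPath_ne hp₁ hp₂ h₁₂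
  obtain ⟨e, he⟩ : ∃ e, e ∈ c.edges := by
    cases c with
    | nil => exact absurd hc (by simp)
    | cons h q => exact ⟨_, List.mem_cons_self⟩
  by_cases hF : (G.deleteEdges {e}).IsAcyclic
  · -- three paths cannot pairwise differ in whether they use `e`
    have := hF.mem_edges_iff_notMem_edges hp₁ hp₂ h₁₂
    have := hF.mem_edges_iff_notMem_edges hp₁ hp₃ h₁₃
    have := hF.mem_edges_iff_notMem_edges hp₂ hp₃ h₂₃
    tauto
  · obtain ⟨b, c', hc'⟩ : ∃ (b : V) (c' : (G.deleteEdges {e}).Walk b b), c'.IsCycle := by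
      simpa [IsAcyclic] using hF
    refine ⟨a, b, c, c'.mapLe (G.deleteEdges_le _), e, hc, hc'.mapLe _, he, fun he' => ?_⟩
    have := c'.edges_subset_edgeSet (by simpa [Walk.mapLe] using he')
    simp [edgeSet_deleteEdges] at this

section Induce

variable {W : Set V}

theorem Walk.IsPath.induce {p : G.Walk u v} (hp : p.IsPath) (hW : ∀ w ∈ p.support, w ∈ W) :
    (p.induce W hW).IsPath := by
  rwa [← Walk.isPath_map_iff_of_injective (f := (Embedding.induce W).toHom) Subtype.val_injective,
    Walk.map_induce]

theorem Walk.induce_injective {p q : G.Walk u v} (hp : ∀ w ∈ p.support, w ∈ W)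
    (hq : ∀ w ∈ q.support, w ∈ W) (h : p.induce W hp = q.induce W hq) : p = q := by
  simpa using congrArg (Walk.map (Embedding.induce W).toHom) h

theorem Walk.IsCycle.map_induce {a : W} {c : (G.induce W).Walk a a} (hc : c.IsCycle) :
    (c.map (Embedding.induce W).toHom).IsCycle :=
  (Walk.isCycle_map_iff_of_injective Subtype.val_injective).mpr hc

theorem Walk.mem_of_mem_support_map_induce {a : W} (c : (G.induce W).Walk a a) {w : V}
    (hw : w ∈ (c.map (Embedding.induce W).toHom).support) : w ∈ W := by
  obtain ⟨w', -, rfl⟩ := List.mem_map.mp ((c.support_map _) ▸ hw)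
  exact w'.2

theorem exists_isCycle_support_subset_of_isPath_ne {p q : G.Walk x y} (hp : p.IsPath)
    (hq : q.IsPath) (hpq : p ≠ q) (hpW : ∀ w ∈ p.support, w ∈ W)
    (hqW : ∀ w ∈ q.support, w ∈ W) :
    ∃ (a : V) (c : G.Walk a a), c.IsCycle ∧ ∀ w ∈ c.support, w ∈ W := by
  obtain ⟨a, c, hc⟩ := exists_isCycle_of_isPath_ne (hp.induce hpW) (hq.induce hqW)
    (mt (Walk.induce_injective hpW hqW) hpq)
  exact ⟨a, _, hc.map_induce, fun w => c.mem_of_mem_support_map_induce⟩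

theorem exists_isCycle_edges_ne_of_isPath [DecidableEq V] {p₁ p₂ p₃ : G.Walk x y}
    (hp₁ : p₁.IsPath) (hp₂ : p₂.IsPath) (hp₃ : p₃.IsPath)
    (h₁₂ : p₁ ≠ p₂) (h₁₃ : p₁ ≠ p₃) (h₂₃ : p₂ ≠ p₃) (hW₁ : ∀ w ∈ p₁.support, w ∈ W)
    (hW₂ : ∀ w ∈ p₂.support, w ∈ W) (hW₃ : ∀ w ∈ p₃.support, w ∈ W) :
    ∃ (a b : V) (c : G.Walk a a) (c' : G.Walk b b), c.IsCycle ∧ c'.IsCycle ∧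
      (∀ w ∈ c.support, w ∈ W) ∧ (∀ w ∈ c'.support, w ∈ W) ∧
      c.edges.toFinset ≠ c'.edges.toFinset := by
  obtain ⟨a, b, c, c', e, hc, hc', he, he'⟩ := exists_isCycle_mem_notMem_of_isPath
    (hp₁.induce hW₁) (hp₂.induce hW₂) (hp₃.induce hW₃) (mt (Walk.induce_injective _ _) h₁₂)
    (mt (Walk.induce_injective _ _) h₁₃) (mt (Walk.induce_injective _ _) h₂₃)
  refine ⟨a, b, _, _, hc.map_induce, hc'.map_induce, fun w => c.mem_of_mem_support_map_induce,
    fun w => c'.mem_of_mem_support_map_induce, fun h => ?_⟩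
  have hmem : Sym2.map (Embedding.induce (G := G) W).toHom e ∈
      (c.map (Embedding.induce W).toHom).edges := by
    rw [Walk.edges_map]
    exact List.mem_map_of_mem he
  replace hmem := List.mem_toFinset.mp ((Finset.ext_iff.mp h _).mp (List.mem_toFinset.mpr hmem))
  obtain ⟨e', he'', hee'⟩ := List.mem_map.mp ((Walk.edges_map _ c') ▸ hmem)
  exact he' (Sym2.map.injective Subtype.val_injective hee' ▸ he'')

end Induce

theorem pathCount_comm (ℓ : ℕ) (i j : V) : pathCount G ℓ i j = pathCount G ℓ j i := by
  have : {p : G.Walk j i | p.IsPath ∧ p.length = ℓ} =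
      Walk.reverse '' {p : G.Walk i j | p.IsPath ∧ p.length = ℓ} := by
    ext q
    refine ⟨fun ⟨hq, hql⟩ => ⟨q.reverse, ⟨hq.reverse, by simpa using hql⟩, q.reverse_reverse⟩, ?_⟩
    rintro ⟨p, ⟨hp, hpl⟩, rfl⟩
    exact ⟨hp.reverse, by simpa using hpl⟩
  rw [pathCount, pathCount, this, Set.ncard_image_of_injective _ Walk.reverse_injective]

/-- The `(i, j)` entry of `B^(ℓ) - D^(ℓ)`. -/
noncomputable def pathExcess (G : SimpleGraph V) (ℓ : ℕ) (i j : V) : ℝ :=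
  pathCount G ℓ i j - if G.edist i j = ℓ then 1 else 0

theorem pathExcess_comm (ℓ : ℕ) (i j : V) : pathExcess G ℓ i j = pathExcess G ℓ j i := by
  rw [pathExcess, pathExcess, pathCount_comm, edist_comm]

theorem exists_isPath_length_eq_edist (h : G.edist u v ≠ ⊤) :
    ∃ p : G.Walk u v, p.IsPath ∧ (p.length : ℕ∞) = G.edist u v := by
  obtain ⟨p, hp, hpl⟩ := (reachable_of_edist_ne_top h).exists_path_of_dist
  exact ⟨p, hp, by rw [hpl, dist, ENat.natCast_toNat h]⟩

theorem nonempty_of_edist_eq {ℓ : ℕ} (hd : G.edist u v = ℓ) :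
    {p : G.Walk u v | p.IsPath ∧ p.length = ℓ}.Nonempty := by
  obtain ⟨p, hp, hpl⟩ := exists_isPath_length_eq_edist (hd ▸ ENat.natCast_ne_top ℓ)
  exact ⟨p, hp, by exact_mod_cast hpl.trans hd⟩

theorem finite_setOf_isPath [Finite V] (P : G.Walk u v → Prop) :
    {p : G.Walk u v | p.IsPath ∧ P p}.Finite := by
  classical
  have := Fintype.ofFinite V
  exact (Set.finite_range (Subtype.val : G.Path u v → G.Walk u v)).subset
    fun p hp => ⟨⟨p, hp.1⟩, rfl⟩

section ShortPaths

variable [Finite V] {ℓ : ℕ} {i j : V}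

theorem ncard_le_ncard_short_paths :
    {p : G.Walk i j | p.IsPath ∧ p.length = ℓ}.ncard ≤
      {p : G.Walk i j | p.IsPath ∧ p.length ≤ ℓ}.ncard :=
  Set.ncard_le_ncard (fun _ hp => ⟨hp.1, hp.2.le⟩) (finite_setOf_isPath _)

theorem ncard_lt_ncard_short_paths_of_edist_ne (hd : G.edist i j ≠ ℓ)
    (hP : {p : G.Walk i j | p.IsPath ∧ p.length = ℓ}.Nonempty) :
    {p : G.Walk i j | p.IsPath ∧ p.length = ℓ}.ncard <
      {p : G.Walk i j | p.IsPath ∧ p.length ≤ ℓ}.ncard := by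
  obtain ⟨p, -, hpl⟩ := hP
  have hdℓ : G.edist i j ≤ ℓ := hpl ▸ edist_le p
  -- a geodesic is a path of length at most `ℓ` but not `ℓ`
  obtain ⟨q, hq, hql⟩ := exists_isPath_length_eq_edist (ne_top_of_le_ne_top (by simp) hdℓ)
  refine Set.ncard_lt_ncard ⟨fun r hr => ⟨hr.1, hr.2.le⟩, fun h => ?_⟩
    (finite_setOf_isPath _)
  have hq' : q.length ≤ ℓ := by exact_mod_cast hql.trans_le hdℓ
  exact hd (hql ▸ congrArg Nat.cast (h ⟨hq, hq'⟩).2)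

theorem abs_pathExcess_le_one (h : {p : G.Walk i j | p.IsPath ∧ p.length ≤ ℓ}.ncard ≤ 2) :
    |pathExcess G ℓ i j| ≤ 1 := by
  have hle := (ncard_le_ncard_short_paths (G := G) (i := i) (j := j) (ℓ := ℓ)).trans h
  rw [pathExcess, pathCount]
  by_cases hd : G.edist i j = ℓ
  · have h₁ : (1 : ℝ) ≤ {p : G.Walk i j | p.IsPath ∧ p.length = ℓ}.ncard := by
      exact_mod_cast (Set.ncard_pos (finite_setOf_isPath _)).mpr (nonempty_of_edist_eq hd)
    have h₂ : ({p : G.Walk i j | p.IsPath ∧ p.length = ℓ}.ncard : ℝ) ≤ 2 := by exact_mod_cast hle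
    rw [if_pos hd, abs_le]
    constructor <;> linarith
  · rw [if_neg hd, sub_zero, Nat.abs_cast, Nat.cast_le_one]
    rcases Set.eq_empty_or_nonempty {p : G.Walk i j | p.IsPath ∧ p.length = ℓ} with hP | hP
    · simp [hP]
    · have := ncard_lt_ncard_short_paths_of_edist_ne hd hP
      omega

theorem one_lt_ncard_short_paths_of_pathExcess_ne_zero (h : pathExcess G ℓ i j ≠ 0) :
    1 < {p : G.Walk i j | p.IsPath ∧ p.length ≤ ℓ}.ncard := by
  have hle := ncard_le_ncard_short_paths (G := G) (i := i) (j := j) (ℓ := ℓ)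
  rw [pathExcess, pathCount] at h
  by_cases hd : G.edist i j = ℓ
  · have := (Set.ncard_pos (finite_setOf_isPath _)).mpr (nonempty_of_edist_eq hd)
    rw [if_pos hd, sub_ne_zero, Nat.cast_eq_one.ne] at h
    omega
  · rw [if_neg hd, sub_zero, Nat.cast_ne_zero] at h
    have := ncard_lt_ncard_short_paths_of_edist_ne hd
      ((Set.ncard_pos (finite_setOf_isPath _)).mp (Nat.pos_of_ne_zero h))
    omega

end ShortPaths

section CycleNbhds

variable {S T : Set V} {i j w : V}

theorem edistToSet_le_edist (hw : w ∈ S) : edistToSet G S v ≤ G.edist v w :=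
  iInf₂_le w hw

theorem edistToSet_anti (hST : S ⊆ T) : edistToSet G T v ≤ edistToSet G S v :=
  biInf_mono hST

theorem edistToSet_add_edistToSet_le (hw : w ∈ S) :
    edistToSet G S i + edistToSet G S j ≤ G.edist i w + G.edist w j :=
  add_le_add (edistToSet_le_edist hw) (edist_comm (G := G) ▸ edistToSet_le_edist hw)

theorem exists_isCycle_edistToSet_add_le [Finite V] {ℓ : ℕ}
    (h : 1 < {p : G.Walk i j | p.IsPath ∧ p.length ≤ ℓ}.ncard) :
    ∃ (a : V) (c : G.Walk a a), c.IsCycle ∧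
      edistToSet G {w | w ∈ c.support} i + edistToSet G {w | w ∈ c.support} j ≤ ℓ := by
  obtain ⟨p, ⟨hp, hpl⟩, q, ⟨hq, hql⟩, hpq⟩ := (Set.one_lt_ncard (finite_setOf_isPath _)).mp h
  obtain ⟨a, c, hc, hcW⟩ := exists_isCycle_support_subset_of_isPath_ne
    (W := {w | G.edist i w + G.edist w j ≤ ℓ}) hp hq hpq
    (fun w hw => (p.edist_add_edist_le_length hw).trans (Nat.cast_le.mpr hpl))
    (fun w hw => (q.edist_add_edist_le_length hw).trans (Nat.cast_le.mpr hql))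
  exact ⟨a, c, hc, (edistToSet_add_edistToSet_le (S := {w | w ∈ c.support})
    c.start_mem_support).trans (hcW a c.start_mem_support)⟩

theorem Walk.IsCycle.support_eq_of_edges_toFinset_eq [DecidableEq V] {a b : V}
    {c : G.Walk a a} {c' : G.Walk b b} (hc : c.IsCycle) (hc' : c'.IsCycle)
    (h : c.edges.toFinset = c'.edges.toFinset) : {w | w ∈ c.support} = {w | w ∈ c'.support} := by
  ext w
  simp only [Set.mem_ofPred_eq, Walk.mem_support_iff_exists_mem_edges_of_not_nil hc.not_nil,
    Walk.mem_support_iff_exists_mem_edges_of_not_nil hc'.not_nil, ← List.mem_toFinset, h]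

def cycleVertices (G : SimpleGraph V) : Set V :=
  {w | ∃ (a : V) (c : G.Walk a a), c.IsCycle ∧ w ∈ c.support}

/-- Where the distance to the cycles exceeds `ℓ`, or is `⊤` (with `toNat ⊤ = 0`), the value is
meaningless; such vertices have zero rows and columns in `pathExcess G ℓ`. -/
noncomputable def cycleWeight (G : SimpleGraph V) (ℓ : ℕ) (β : ℝ) (v : V) : ℝ :=
  β ^ (ℓ - (edistToSet G (cycleVertices G) v).toNat)

variable [DecidableEq V]

def CycleNbhdsDisjoint (G : SimpleGraph V) (ℓ : ℕ) : Prop :=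
  ∀ (a b : V) (c₁ : G.Walk a a) (c₂ : G.Walk b b),
    c₁.IsCycle → c₂.IsCycle → c₁.edges.toFinset ≠ c₂.edges.toFinset →
    Disjoint {v : V | edistToSet G {w | w ∈ c₁.support} v ≤ (ℓ : ℕ∞)}
      {v : V | edistToSet G {w | w ∈ c₂.support} v ≤ (ℓ : ℕ∞)}

namespace CycleNbhdsDisjoint

variable {ℓ : ℕ} {a b : V} {c : G.Walk a a} {c' : G.Walk b b}

theorem edges_toFinset_eq (hdisj : CycleNbhdsDisjoint G ℓ) (hc : c.IsCycle) (hc' : c'.IsCycle)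
    (h : edistToSet G {w | w ∈ c.support} v ≤ ℓ) (h' : edistToSet G {w | w ∈ c'.support} v ≤ ℓ) :
    c.edges.toFinset = c'.edges.toFinset := by
  by_contra hne
  exact Set.disjoint_left.mp (hdisj a b c c' hc hc' hne) h h'

theorem edistToSet_eq (hdisj : CycleNbhdsDisjoint G ℓ) (hc : c.IsCycle) (hc' : c'.IsCycle)
    (h : edistToSet G {w | w ∈ c.support} v ≤ ℓ) (h' : edistToSet G {w | w ∈ c'.support} v ≤ ℓ) :
    edistToSet G {w | w ∈ c.support} = edistToSet G {w | w ∈ c'.support} := by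
  rw [hc.support_eq_of_edges_toFinset_eq hc' (hdisj.edges_toFinset_eq hc hc' h h')]

theorem ncard_short_paths_le_two [Finite V] (hdisj : CycleNbhdsDisjoint G ℓ) (i j : V) :
    {p : G.Walk i j | p.IsPath ∧ p.length ≤ ℓ}.ncard ≤ 2 := by
  by_contra! h
  obtain ⟨p₁, ⟨hp₁, hl₁⟩, p₂, ⟨hp₂, hl₂⟩, p₃, ⟨hp₃, hl₃⟩, h₁₂, h₁₃, h₂₃⟩ :=
    (Set.two_lt_ncard (finite_setOf_isPath _)).mp h
  have hW : ∀ {p : G.Walk i j}, p.length ≤ ℓ → ∀ w ∈ p.support,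
      w ∈ {w | G.edist i w + G.edist w j ≤ ℓ} :=
    fun hl w hw => (Walk.edist_add_edist_le_length _ hw).trans (Nat.cast_le.mpr hl)
  obtain ⟨a, b, c, c', hc, hc', hcW, hc'W, hne⟩ :=
    exists_isCycle_edges_ne_of_isPath hp₁ hp₂ hp₃ h₁₂ h₁₃ h₂₃ (hW hl₁) (hW hl₂) (hW hl₃)
  have hnear : ∀ {a : V} {c : G.Walk a a},
      (∀ w ∈ c.support, w ∈ {w | G.edist i w + G.edist w j ≤ ℓ}) →
      edistToSet G {w | w ∈ c.support} i ≤ ℓ := fun {_ c} hcW =>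
    le_self_add.trans ((edistToSet_add_edistToSet_le (S := {w | w ∈ c.support})
      c.start_mem_support).trans (hcW _ c.start_mem_support))
  exact hne (hdisj.edges_toFinset_eq hc hc' (hnear hcW) (hnear hc'W))

theorem edistToSet_add_le_of_pathExcess_ne_zero [Finite V] (hdisj : CycleNbhdsDisjoint G ℓ)
    (hA : pathExcess G ℓ i j ≠ 0) (hc : c.IsCycle) (hi : edistToSet G {w | w ∈ c.support} i ≤ ℓ) :
    edistToSet G {w | w ∈ c.support} i + edistToSet G {w | w ∈ c.support} j ≤ ℓ := by
  obtain ⟨b, c', hc', h⟩ :=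
    exists_isCycle_edistToSet_add_le (one_lt_ncard_short_paths_of_pathExcess_ne_zero hA)
  rwa [hdisj.edistToSet_eq hc hc' hi (le_self_add.trans h)]

theorem edistToSet_cycleVertices_eq (hdisj : CycleNbhdsDisjoint G ℓ) (hc : c.IsCycle)
    (hv : edistToSet G {w | w ∈ c.support} v ≤ ℓ) :
    edistToSet G (cycleVertices G) v = edistToSet G {w | w ∈ c.support} v := by
  refine le_antisymm (edistToSet_anti fun w hw => ⟨a, c, hc, hw⟩) (le_iInf₂ ?_)
  rintro w ⟨b, c', hc', hw⟩
  by_cases hv' : edistToSet G {w | w ∈ c'.support} v ≤ ℓ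
  · rw [hdisj.edistToSet_eq hc hc' hv hv']
    exact edistToSet_le_edist hw
  · exact hv.trans ((not_le.mp hv').le.trans (edistToSet_le_edist hw))

theorem abs_pathExcess_mul_cycleWeight_le [Finite V] {β : ℝ} (hdisj : CycleNbhdsDisjoint G ℓ)
    (hβ : 0 ≤ β) (hc : c.IsCycle) {s : ℕ} (hs : edistToSet G {w | w ∈ c.support} i = s)
    (hsℓ : s ≤ ℓ) (j : V) :
    |pathExcess G ℓ i j| * cycleWeight G ℓ β j ≤
      if edistToSet G {w | w ∈ c.support} j ≤ (ℓ - s : ℕ) then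
        β ^ (ℓ - (edistToSet G {w | w ∈ c.support} j).toNat) else 0 := by
  by_cases hA : pathExcess G ℓ i j = 0
  · rw [hA, abs_zero, zero_mul]
    split_ifs <;> positivity
  have hi : edistToSet G {w | w ∈ c.support} i ≤ ℓ := hs ▸ Nat.cast_le.mpr hsℓ
  have hij := hdisj.edistToSet_add_le_of_pathExcess_ne_zero hA hc hi
  rw [if_pos (by rw [ENat.natCast_sub, ← hs]; exact ENat.le_sub_of_add_le_left (by simp [hs]) hij),
    cycleWeight, hdisj.edistToSet_cycleVertices_eq hc (le_add_self.trans hij)]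
  exact mul_le_of_le_one_left (by positivity)
    (abs_pathExcess_le_one (hdisj.ncard_short_paths_le_two i j))

end CycleNbhdsDisjoint

end CycleNbhds

theorem sum_abs_pathExcess_mul_cycleWeight_le [Fintype V] [DecidableEq V] {ℓ : ℕ} {β L : ℝ}
    (hdisj : CycleNbhdsDisjoint G ℓ)
    (hgrowth : ∀ (a : V) (c : G.Walk a a), c.IsCycle → ∀ t ≤ ℓ,
      ({v : V | edistToSet G {w | w ∈ c.support} v = (t : ℕ∞)}.ncard : ℝ) ≤ L * (β ^ 2) ^ t)
    (hβ : 1 ≤ β) (hL : 0 ≤ L) (i : V) :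
    ∑ j, |pathExcess G ℓ i j| * cycleWeight G ℓ β j ≤
      (ℓ + 1) * L * β ^ ℓ * cycleWeight G ℓ β i := by
  have hβ0 : 0 ≤ β := zero_le_one.trans hβ
  by_cases h0 : ∀ j, pathExcess G ℓ i j = 0
  · simp only [h0, abs_zero, zero_mul, Finset.sum_const_zero, cycleWeight]
    positivity
  push Not at h0
  obtain ⟨j₀, hj₀⟩ := h0
  obtain ⟨a, c, hc, hcij⟩ :=
    exists_isCycle_edistToSet_add_le (one_lt_ncard_short_paths_of_pathExcess_ne_zero hj₀)
  set d := edistToSet G {w | w ∈ c.support}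
  have hi : d i ≤ ℓ := le_self_add.trans hcij
  obtain ⟨s, hs⟩ := ENat.ne_top_iff_exists.mp (ne_top_of_le_ne_top (by simp) hi)
  have hsℓ : s ≤ ℓ := by exact_mod_cast hs ▸ hi
  have hwi : cycleWeight G ℓ β i = β ^ (ℓ - s) := by
    rw [cycleWeight, hdisj.edistToSet_cycleVertices_eq hc hi]
    change β ^ (ℓ - (d i).toNat) = _
    rw [← hs, ENat.toNat_natCast]
  calc ∑ j, |pathExcess G ℓ i j| * cycleWeight G ℓ β j
      ≤ ∑ j with d j ≤ (ℓ - s : ℕ), β ^ (ℓ - (d j).toNat) := by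
        rw [Finset.sum_filter]
        exact Finset.sum_le_sum fun j _ =>
          hdisj.abs_pathExcess_mul_cycleWeight_le hβ0 hc hs.symm hsℓ j
    _ ≤ ((ℓ - s : ℕ) + 1) * L * β ^ (ℓ + (ℓ - s)) :=
        sum_pow_sub_toNat_le d hβ (Nat.sub_le ℓ s) (hgrowth a c hc)
    _ ≤ (ℓ + 1) * L * β ^ ℓ * cycleWeight G ℓ β i := by
        rw [hwi, pow_add, ← mul_assoc]
        gcongr
        exact_mod_cast Nat.sub_le ℓ s

end SimpleGraph

theorem specRad_pathCount_sub_dist_le_general {V : Type*} [Fintype V] [DecidableEq V]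
    (G : SimpleGraph V) (ℓ : ℕ) (α L : ℝ) (hα : 1 ≤ α) (hL : 0 < L)
    (hgrowth : ∀ (a : V) (c : G.Walk a a), c.IsCycle → ∀ t ≤ ℓ,
      ({v : V | edistToSet G {w | w ∈ c.support} v = (t : ℕ∞)}.ncard : ℝ) ≤ L * α ^ t)
    (hdisj : ∀ (a b : V) (c₁ : G.Walk a a) (c₂ : G.Walk b b),
      c₁.IsCycle → c₂.IsCycle → c₁.edges.toFinset ≠ c₂.edges.toFinset →
      Disjoint {v : V | edistToSet G {w | w ∈ c₁.support} v ≤ (ℓ : ℕ∞)}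
        {v : V | edistToSet G {w | w ∈ c₂.support} v ≤ (ℓ : ℕ∞)}) :
    specRad (Matrix.of fun i j : V =>
        (pathCount G ℓ i j : ℝ) - (if G.edist i j = (ℓ : ℕ∞) then 1 else 0)) ≤
      ((ℓ : ℝ) + 1) * L * Real.sqrt (α ^ ℓ) := by
  have hβ : 1 ≤ √α := Real.one_le_sqrt.mpr hα
  have hsq : √α ^ 2 = α := Real.sq_sqrt (zero_le_one.trans hα)
  have hrow : ∀ i, ∑ j, |G.pathExcess ℓ i j| * G.cycleWeight ℓ √α j ≤
      (ℓ + 1) * L * √α ^ ℓ * G.cycleWeight ℓ √α i :=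
    G.sum_abs_pathExcess_mul_cycleWeight_le hdisj (by rwa [hsq]) hβ hL.le
  have hcol : ∀ j, ∑ i, |G.pathExcess ℓ i j| * G.cycleWeight ℓ √α i ≤
      (ℓ + 1) * L * √α ^ ℓ * G.cycleWeight ℓ √α j := fun j =>
    (Finset.sum_congr rfl fun i _ => by rw [G.pathExcess_comm ℓ i j]).trans_le (hrow j)
  have hsqrt : √(α ^ ℓ) = √α ^ ℓ := by
    rw [← Real.sqrt_sq (pow_nonneg (Real.sqrt_nonneg α) ℓ), ← pow_mul, mul_comm, pow_mul, hsq]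
  rw [specRad, hsqrt]
  exact Matrix.norm_toEuclideanCLM_le_of_weighted_sum_le _
    (fun i => pow_pos (zero_lt_one.trans_le hβ) _) (by positivity) hrow hcol

/-- Suppose `G` is `ℓ`-tangle-free, for every cycle `𝒞` the number of vertices at
distance `t ≤ ℓ` from `𝒞` is at most `L·α^t`, and the sets `V_𝒞 = {v | d(v,𝒞) ≤ ℓ}` are
pairwise disjoint over distinct cycles. Then `ρ(B^(ℓ) - D^(ℓ)) ≤ (ℓ+1)·L·α^(ℓ/2)`. -/
theorem specRad_pathCount_sub_dist_le {V : Type*} [Fintype V] [DecidableEq V]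
    (G : SimpleGraph V) (ℓ : ℕ) (hℓ : 1 ≤ ℓ) (α L : ℝ) (hα : 1 ≤ α) (hL : 0 < L)
    (htf : TangleFree G ℓ)
    (hgrowth : ∀ (a : V) (c : G.Walk a a), c.IsCycle → ∀ t ≤ ℓ,
      ({v : V | edistToSet G {w | w ∈ c.support} v = (t : ℕ∞)}.ncard : ℝ) ≤ L * α ^ t)
    (hdisj : ∀ (a b : V) (c₁ : G.Walk a a) (c₂ : G.Walk b b),
      c₁.IsCycle → c₂.IsCycle → c₁.edges.toFinset ≠ c₂.edges.toFinset →
      Disjoint {v : V | edistToSet G {w | w ∈ c₁.support} v ≤ (ℓ : ℕ∞)}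
        {v : V | edistToSet G {w | w ∈ c₂.support} v ≤ (ℓ : ℕ∞)}) :
    specRad (Matrix.of fun i j : V =>
        (pathCount G ℓ i j : ℝ) - (if G.edist i j = (ℓ : ℕ∞) then 1 else 0)) ≤
      ((ℓ : ℝ) + 1) * L * Real.sqrt (α ^ ℓ) :=
  specRad_pathCount_sub_dist_le_general G ℓ α L hα hL hgrowth hdisj
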